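/- Let G = (V,(c_{xy})) be a finite connected weighted graph, α positive site weights, ω, θ nonnegative site weight families, and ϱ > 0. Fix k ≥ 1 and suppose ψ : Ξ_k → ℝ satisfies the eigenvalue equation L_{G,α,ω,k} ψ = −λ ψ for the k-particle purely absorbing generator. Then the polynomial F_{α,ϱ}^ψ(η) = Σ_{ξ∈Ξ_k} μ_{α,k}(ξ) ψ(ξ) D_{α,ϱ}(ξ,η) satisfies, for every configuration η : V → ℕ, the generalized eigenvalue equation L_{G,α,ω,θ} F_{α,ϱ}^ψ(η) = −λ F_{α,ϱ}^ψ(η) + F_{α,ϱ}^{b ψ}(η), where b = 𝔟^θ_{α,ω,ϱ,k−1} is given by b ψ(ζ) = k Σ_{x∈V} ω_x (θ_x − ϱ) ((α_x+ζ_x)/(|α|+k−1)) ψ(ζ+δ_x) for ζ ∈ Ξ_{k−1}, and F_{α,ϱ}^{bψ} is the corresponding polynomial built from bψ on Ξ_{k−1} (with the convention that for a scalar c, F_{α,ϱ}^c ≡ c). -/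

import Mathlib

open scoped BigOperators Classical

noncomputable section

/-- The configuration space of `k` particles on the finite site set `V`. -/
def Config (V : Type*) [Fintype V] (k : ℕ) : Type _ :=
  {η : V → ℕ // ∑ x, η x = k}

namespace Config

variable {V : Type*} [Fintype V] [DecidableEq V] {k : ℕ}

lemma apply_le (η : Config V k) (x : V) : η.1 x ≤ k := by
  have h := Finset.single_le_sum (f := η.1) (fun i _ => Nat.zero_le _) (Finset.mem_univ x)
  simpa [η.2] using h

instance instFintype : Fintype (Config V k) :=
  Fintype.ofInjective
    (fun η : Config V k => (fun x => (⟨η.1 x, Nat.lt_succ_of_le (η.apply_le x)⟩ : Fin (k+1))))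
    (fun a b hab => Subtype.ext (funext fun x => congrArg Fin.val (congrFun hab x)))

/-- The configuration `η - δ_x + δ_y` (move a particle from `x` to `y`);
by convention it is `η` itself when `η` has no particle at `x`. -/
def move (η : Config V k) (x y : V) : Config V k :=
  if h : η.1 x = 0 then η else
    ⟨fun z => η.1 z - (if z = x then 1 else 0) + (if z = y then 1 else 0), by
      have hle : ∀ z : V, (if z = x then 1 else 0) ≤ η.1 z := fun z => by
        by_cases hz : z = x
        · simpa [hz] using Nat.one_le_iff_ne_zero.2 h
        · simp [hz]
      have cast_term : ∀ z : V,
          ((η.1 z - (if z = x then 1 else 0) + (if z = y then 1 else 0) : ℕ) : ℤ)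
            = (η.1 z : ℤ) - (if z = x then 1 else 0) + (if z = y then 1 else 0) := by
        intro z
        rw [Nat.cast_add, Nat.cast_sub (hle z)]
        by_cases hz : z = x <;> by_cases hz' : z = y <;> simp [hz, hz']
      have key : ((∑ z, (η.1 z - (if z = x then 1 else 0) + (if z = y then 1 else 0)) : ℕ) : ℤ)
          = (k : ℤ) := by
        rw [Nat.cast_sum]
        rw [Finset.sum_congr rfl (fun z _ => cast_term z)]
        rw [Finset.sum_add_distrib, Finset.sum_sub_distrib]
        have h1 : (∑ z, (η.1 z : ℤ)) = (k : ℤ) := by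
          rw [← Nat.cast_sum, η.2]
        rw [h1]
        simp
      exact_mod_cast key⟩

/-- The configuration `η + δ_x`. -/
def addOne (η : Config V k) (x : V) : Config V (k + 1) :=
  ⟨fun z => η.1 z + (if z = x then 1 else 0), by
    rw [Finset.sum_add_distrib, η.2]
    simp⟩

end Config

section Defs

variable {V : Type*} [Fintype V] [DecidableEq V]

/-- The configuration with `k` particles stacked at `x`. -/
def stackConfig (V : Type*) [Fintype V] [DecidableEq V] (k : ℕ) (x : V) : Config V k :=
  ⟨fun z => if z = x then k else 0, by simp⟩

/-- Normalization constant `Z_{α,k}`. -/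
def sipZ (α : V → ℝ) (k : ℕ) : ℝ :=
  Real.Gamma ((∑ x, α x) + k) / (Real.Gamma (∑ x, α x) * (Nat.factorial k))

/-- The reversible (Dirichlet-multinomial) measure `μ_{α,k}` of SIP. -/
def sipMeasure (α : V → ℝ) {k : ℕ} (η : Config V k) : ℝ :=
  (sipZ α k)⁻¹ * ∏ x, Real.Gamma (α x + η.1 x) / (Real.Gamma (α x) * (Nat.factorial (η.1 x)))

/-- The Dirichlet form of `SIP_k(G, α)`. -/
def dirichletForm (c : V → V → ℝ) (α : V → ℝ) {k : ℕ} (f : Config V k → ℝ) : ℝ :=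
  (1 / 2) * ∑ η : Config V k, ∑ x, ∑ y,
    sipMeasure α η * (c x y * η.1 x * (α y + η.1 y) * (f (η.move x y) - f η) ^ 2)

/-- Mean of `f` under `μ_{α,k}`. -/
def sipMean (α : V → ℝ) {k : ℕ} (f : Config V k → ℝ) : ℝ :=
  ∑ η : Config V k, sipMeasure α η * f η

/-- Variance of `f` under `μ_{α,k}`. -/
def sipVar (α : V → ℝ) {k : ℕ} (f : Config V k → ℝ) : ℝ :=
  ∑ η : Config V k, sipMeasure α η * (f η - sipMean α f) ^ 2

/-- Squared `L²(μ_{α,k})`-norm of `f`. -/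
def sipNormSq (α : V → ℝ) {k : ℕ} (f : Config V k → ℝ) : ℝ :=
  ∑ η : Config V k, sipMeasure α η * (f η) ^ 2

/-- The spectral gap `gap_k(G,α)` of the `k`-particle SIP. -/
def sipGap (c : V → V → ℝ) (α : V → ℝ) (k : ℕ) : ℝ :=
  sInf {r : ℝ | ∃ f : Config V k → ℝ, (∃ η ζ : Config V k, f η ≠ f ζ) ∧
    r = dirichletForm c α f / sipVar α f}

/-- `gap_SIP(G,α) = inf_{k ≥ 2} gap_k(G,α)`. -/
def sipGapInf (c : V → V → ℝ) (α : V → ℝ) : ℝ :=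
  sInf {r : ℝ | ∃ k : ℕ, 2 ≤ k ∧ r = sipGap c α k}

/-- The simple graph underlying a symmetric family of conductances. -/
def graphOf (c : V → V → ℝ) : SimpleGraph V where
  Adj x y := x ≠ y ∧ (0 < c x y ∨ 0 < c y x)
  symm := ⟨fun x y h => ⟨h.1.symm, h.2.symm⟩⟩
  loopless := ⟨fun x h => h.1 rfl⟩

/-- The diameter of the weighted graph: maximal graph distance between two sites. -/
def graphDiam (c : V → V → ℝ) : ℕ :=
  Finset.univ.sup (fun p : V × V => (graphOf c).dist p.1 p.2)

/-- The minimal positive conductance. -/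
def cMin (c : V → V → ℝ) : ℝ :=
  sInf {r : ℝ | 0 < r ∧ ∃ x y, c x y = r}

/-- Minimal site weight. -/
def alphaMin (α : V → ℝ) : ℝ := sInf (Set.range α)

/-- Maximal site weight. -/
def alphaMax (α : V → ℝ) : ℝ := sSup (Set.range α)

/-- Conductances of the complete graph on `V`. -/
def completeCond (V : Type*) [DecidableEq V] : V → V → ℝ :=
  fun x y => if x = y then 0 else 1

/-- The generator matrix of `SIP_k(G,α)` acting on `ℝ^{Ξ_k}` by `mulVec`. -/
def sipMatrix (c : V → V → ℝ) (α : V → ℝ) (k : ℕ) : Matrix (Config V k) (Config V k) ℝ :=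
  fun η ζ => ∑ x, ∑ y, c x y * η.1 x * (α y + η.1 y) *
    ((if η.move x y = ζ then 1 else 0) - (if ζ = η then 1 else 0))

/-- The generator matrix `A_{β,k}` of `k` independent random walks. -/
def rwPartMatrix (c : V → V → ℝ) (β : V → ℝ) (k : ℕ) : Matrix (Config V k) (Config V k) ℝ :=
  fun η ζ => ∑ x, ∑ y, c x y * η.1 x * β y *
    ((if η.move x y = ζ then 1 else 0) - (if ζ = η then 1 else 0))

/-- The generator matrix `B_k` of the pure interaction (fast) dynamics. -/
def clumpMatrix (c : V → V → ℝ) (k : ℕ) : Matrix (Config V k) (Config V k) ℝ :=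
  fun η ζ => ∑ x, ∑ y, c x y * η.1 x * η.1 y *
    ((if η.move x y = ζ then 1 else 0) - (if ζ = η then 1 else 0))

/-- The generator matrix of the purely absorbing (killed) SIP. -/
def killedMatrix (c : V → V → ℝ) (α ω : V → ℝ) (k : ℕ) :
    Matrix (Config V k) (Config V k) ℝ :=
  fun η ζ => sipMatrix c α k η ζ - (if ζ = η then ∑ x, ω x * η.1 x else 0)

/-- `η ∈ Ω_k`: absorbing configurations for the fast dynamics. -/
def inOmega (c : V → V → ℝ) {k : ℕ} (η : Config V k) : Prop :=
  ∀ x y, c x y * η.1 x * η.1 y = 0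

/-- The number of occupied sites (stacks) of a configuration. -/
def numStacks {k : ℕ} (η : Config V k) : ℕ :=
  (Finset.univ.filter fun x => 0 < η.1 x).card

/-- Jump rates of `k` independent random walks: `r^A(η,ζ)`. -/
def rateA (c : V → V → ℝ) (β : V → ℝ) {k : ℕ} (η ζ : Config V k) : ℝ :=
  ∑ x, ∑ y, if η.1 x ≠ 0 ∧ η.move x y = ζ then c x y * η.1 x * β y else 0

/-- Metastable jump rates `r^M(η,ξ) = Σ_ζ r^A(η,ζ) h_ξ(ζ)`, given absorption
probabilities `h`. -/
def rateM (c : V → V → ℝ) (β : V → ℝ) {k : ℕ} (h : Config V k → Config V k → ℝ)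
    (η ξ : Config V k) : ℝ :=
  ∑ ζ, rateA c β η ζ * h ξ ζ

/-- The metastable generator on `Ω_k`, given absorption probabilities `h`. -/
def metaGen (c : V → V → ℝ) (β : V → ℝ) {k : ℕ} (h : Config V k → Config V k → ℝ)
    (g : Config V k → ℝ) (η : Config V k) : ℝ :=
  ∑ ξ, if inOmega c ξ ∧ ξ ≠ η then rateM c β h η ξ * (g ξ - g η) else 0

/-- The (restricted) annihilation operator `â_{k+1} g (η) = Σ_x η_x g(η - δ_x)`. -/
def annihilate {k : ℕ} (g : Config V k → ℝ) (η : Config V (k + 1)) : ℝ :=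
  ∑ x, ∑ ξ : Config V k, if ξ.addOne x = η then (η.1 x : ℝ) * g ξ else 0

/-- The SIP generator as an operator on functions. -/
def sipGen (c : V → V → ℝ) (α : V → ℝ) {k : ℕ} (f : Config V k → ℝ) (η : Config V k) : ℝ :=
  ∑ x, ∑ y, c x y * η.1 x * (α y + η.1 y) * (f (η.move x y) - f η)

/-- The purely absorbing (killed) SIP generator. -/
def killedGen (c : V → V → ℝ) (α ω : V → ℝ) {k : ℕ} (f : Config V k → ℝ)
    (η : Config V k) : ℝ :=
  sipGen c α f η - f η * ∑ x, ω x * η.1 x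

/-- Spectral gap of the killed `k`-particle SIP (Rayleigh quotient infimum). -/
def killedGap (c : V → V → ℝ) (α ω : V → ℝ) (k : ℕ) : ℝ :=
  sInf {r : ℝ | ∃ f : Config V k → ℝ, f ≠ 0 ∧
    r = (∑ η, sipMeasure α η * f η * (-(killedGen c α ω f η))) / sipNormSq α f}

/-- `λ_{k,k}(β)`: the variational bottom eigenvalue of `k` independent walks killed
upon two particles becoming adjacent. -/
def lamLevel (c : V → V → ℝ) (β : V → ℝ) (k : ℕ) : ℝ :=
  sInf {r : ℝ | ∃ f : Config V k → ℝ, f ≠ 0 ∧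
    (∀ η : Config V k, ¬(inOmega c η ∧ numStacks η = k) → f η = 0) ∧
    r = dirichletForm c β f / sipNormSq β f}


/-- The symmetrizing measure `ς_{β,k,m}` on stack configurations. -/
def stackMeasure (β : V → ℝ) {k : ℕ} (η : Config V k) : ℝ :=
  ∏ x, if 0 < η.1 x then β x / η.1 x else 1

/-- The lookdown generator of the SIP with killing, on labeled configurations. -/
def lookdownGen (c : V → V → ℝ) (α ω : V → ℝ) (k : ℕ) (φ : (Fin k → V) → ℝ)
    (v : Fin k → V) : ℝ :=
  (∑ i : Fin k, ∑ x, ∑ y, c x y * (if x = v i then 1 else 0) *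
      (α y + 2 * ∑ j : Fin k, (if (j : ℕ) < (i : ℕ) ∧ v j = y then 1 else 0)) *
      (φ (Function.update v i y) - φ v))
    - φ v * ∑ i, ω (v i)

/-- The unlabeling map `Φ_k` from labeled to unlabeled configurations. -/
def unlabel {k : ℕ} (v : Fin k → V) : Config V k :=
  ⟨fun z => (Finset.univ.filter fun i => v i = z).card, by
    have h := Finset.card_eq_sum_card_fiberwise
      (f := v) (s := Finset.univ) (t := Finset.univ) (fun i _ => Finset.mem_univ _)
    simpa using h.symm⟩

/-- The symmetrization operator `S_k`. -/
def symmetrize (k : ℕ) (φ : (Fin k → V) → ℝ) (v : Fin k → V) : ℝ :=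
  (1 / (Nat.factorial k : ℝ)) * ∑ σ : Equiv.Perm (Fin k), φ (fun i => v (σ i))

/-- `η + δ_x` on the full configuration space `ℕ^V`. -/
def addFn (η : V → ℕ) (x : V) : V → ℕ := fun z => η z + (if z = x then 1 else 0)

/-- `η - δ_x` on the full configuration space (truncated subtraction). -/
def remFn (η : V → ℕ) (x : V) : V → ℕ := fun z => η z - (if z = x then 1 else 0)

/-- `η - δ_x + δ_y` on the full configuration space; `η` itself when `η x = 0`. -/
def moveFn (η : V → ℕ) (x y : V) : V → ℕ :=
  if η x = 0 then η else fun z => η z - (if z = x then 1 else 0) + (if z = y then 1 else 0)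

/-- The generator of the non-conservative (open) SIP. -/
def openGen (c : V → V → ℝ) (α ω θ : V → ℝ) (f : (V → ℕ) → ℝ) (η : V → ℕ) : ℝ :=
  (∑ x, ∑ y, c x y * η x * (α y + η y) * (f (moveFn η x y) - f η))
  + ∑ x, ω x * ((η x : ℝ) * (1 + θ x) * (f (remFn η x) - f η)
      + θ x * (α x + η x) * (f (addFn η x) - f η))

/-- One-site Meixner duality function at density `0`:
`d_{a,0}(m,n) = (n!/(n-m)!) (Γ(a)/Γ(a+m)) 1{m ≤ n}`. -/
def dualD0 (a : ℝ) (m n : ℕ) : ℝ :=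
  if m ≤ n then (Nat.descFactorial n m : ℝ) * (Real.Gamma a / Real.Gamma (a + m)) else 0

/-- One-site Meixner duality function at density `ϱ`. -/
def dualD (a ϱ : ℝ) (m n : ℕ) : ℝ :=
  ∑ l ∈ Finset.range (m + 1), (Nat.choose m l : ℝ) * dualD0 a l n * (-ϱ) ^ (m - l)

/-- The orthogonal duality function `D_{α,ϱ}(ξ,η)`. -/
def dualityFn (α : V → ℝ) (ϱ : ℝ) {k : ℕ} (ξ : Config V k) (η : V → ℕ) : ℝ :=
  ∏ x, dualD (α x) ϱ (ξ.1 x) (η x)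

/-- The polynomial `F_{α,ϱ}^ψ` associated to `ψ : Ξ_k → ℝ`. -/
def liftF (α : V → ℝ) (ϱ : ℝ) {k : ℕ} (ψ : Config V k → ℝ) (η : V → ℕ) : ℝ :=
  ∑ ξ : Config V k, sipMeasure α ξ * ψ ξ * dualityFn α ϱ ξ η

end Defs


end


noncomputable section
namespace SIPaux
open Finset


lemma gamma_pos (a : ℝ) (ha : 0 < a) (m : ℕ) : 0 < Real.Gamma (a + m) :=
  Real.Gamma_pos_of_pos (by positivity)

lemma gamma_step (a : ℝ) (ha : 0 < a) (m : ℕ) :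
    Real.Gamma (a + ((m : ℝ) + 1)) = (a + m) * Real.Gamma (a + m) := by
  rw [show a + ((m : ℝ) + 1) = (a + m) + 1 by ring, Real.Gamma_add_one (by positivity)]

lemma dualD0_eq (a : ℝ) (m n : ℕ) :
    dualD0 a m n = (Nat.descFactorial n m : ℝ) * (Real.Gamma a / Real.Gamma (a + m)) := by
  unfold dualD0
  by_cases h : m ≤ n
  · simp [h]
  · rw [if_neg h, Nat.descFactorial_eq_zero_iff_lt.2 (lt_of_not_ge h)]
    simp

lemma descR2 (n m : ℕ) :
    (Nat.descFactorial n (m + 1) : ℝ) = ((n : ℝ) - m) * Nat.descFactorial n m := by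
  by_cases h : m ≤ n
  · rw [Nat.descFactorial_succ, Nat.cast_mul, Nat.cast_sub h]
  · rw [Nat.descFactorial_eq_zero_iff_lt.2 (lt_of_not_ge h),
      Nat.descFactorial_eq_zero_iff_lt.2 (by omega)]
    simp

lemma descR1 (n m : ℕ) :
    (Nat.descFactorial (n + 1) (m + 1) : ℝ) = ((n : ℝ) + 1) * Nat.descFactorial n m := by
  rw [Nat.succ_descFactorial_succ, Nat.cast_mul, Nat.cast_add, Nat.cast_one]

-- R1
lemma d0_R1 (a : ℝ) (ha : 0 < a) (m n : ℕ) :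
    (n : ℝ) * dualD0 a m (n - 1) = (a + m) * dualD0 a (m + 1) n := by
  cases n with
  | zero => simp [dualD0_eq, Nat.descFactorial_eq_zero_iff_lt.2 (Nat.succ_pos m)]
  | succ n =>
    rw [dualD0_eq, dualD0_eq, Nat.add_sub_cancel, descR1]
    simp only [Nat.cast_add, Nat.cast_one]
    rw [gamma_step a ha m]
    have h1 := (gamma_pos a ha m).ne'
    field_simp

-- R3
lemma d0_R3 (a : ℝ) (ha : 0 < a) (m n : ℕ) :
    (n : ℝ) * dualD0 a m n = (a + m) * dualD0 a (m + 1) n + m * dualD0 a m n := by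
  rw [dualD0_eq, dualD0_eq, descR2]
  simp only [Nat.cast_add, Nat.cast_one]
  rw [gamma_step a ha m]
  have h1 := (gamma_pos a ha m).ne'
  field_simp
  ring

-- R2
lemma d0_R2 (a : ℝ) (ha : 0 < a) (m n : ℕ) :
    (a + (n : ℝ)) * dualD0 a m (n + 1) =
      (a + m) * dualD0 a (m + 1) n + (a + 2 * m) * dualD0 a m n
        + m * dualD0 a (m - 1) n := by
  cases m with
  | zero =>
    simp only [Nat.cast_zero, Nat.zero_sub, zero_mul, add_zero, mul_zero]
    rw [dualD0_eq, dualD0_eq, dualD0_eq]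
    simp only [Nat.descFactorial_zero, Nat.descFactorial_one, Nat.cast_one, Nat.cast_zero,
      Nat.cast_add, zero_add, add_zero]
    have h2 : Real.Gamma (a + 1) = a * Real.Gamma a := Real.Gamma_add_one ha.ne'
    have h0 : Real.Gamma a ≠ 0 := (Real.Gamma_pos_of_pos ha).ne'
    rw [h2]
    field_simp
    ring
  | succ m =>
    have k2 : (Nat.descFactorial n (m + 1 + 1) : ℝ)
        = ((n : ℝ) - (m + 1)) * (((n : ℝ) - m) * Nat.descFactorial n m) := by
      rw [descR2 n (m + 1), descR2 n m, Nat.cast_add, Nat.cast_one]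
    have k1 : (Nat.descFactorial n (m + 1) : ℝ) = ((n : ℝ) - m) * Nat.descFactorial n m :=
      descR2 n m
    rw [dualD0_eq, dualD0_eq, dualD0_eq, dualD0_eq, Nat.add_sub_cancel, descR1, k2, k1]
    simp only [Nat.cast_add, Nat.cast_one]
    have g1 : Real.Gamma (a + ((m : ℝ) + 1)) = (a + m) * Real.Gamma (a + m) :=
      gamma_step a ha m
    have g2 : Real.Gamma (a + ((m : ℝ) + 1 + 1))
        = (a + m + 1) * ((a + m) * Real.Gamma (a + m)) := by
      have := gamma_step a ha (m + 1)
      simp only [Nat.cast_add, Nat.cast_one] at this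
      rw [show a + ((m : ℝ) + 1 + 1) = a + (((m:ℝ)+1) + 1) by ring, this, g1]
      ring
    rw [g2, g1]
    have h1 := (gamma_pos a ha m).ne'
    have h2 : a + (m : ℝ) + 1 ≠ 0 := by positivity
    have h0 : Real.Gamma a ≠ 0 := (Real.Gamma_pos_of_pos ha).ne'
    field_simp
    ring



/-- auxiliary sum. -/
def Splus (a ϱ : ℝ) (m n : ℕ) : ℝ :=
  ∑ l ∈ Finset.range (m + 1), (Nat.choose m l : ℝ) * dualD0 a (l + 1) n * (-ϱ) ^ (m - l)

lemma choose_real_shift (m l : ℕ) (hl : l < m + 1) :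
    ((m : ℝ) - l) * (Nat.choose m l : ℝ) = (m : ℝ) * (Nat.choose (m - 1) l : ℝ) := by
  cases m with
  | zero => interval_cases l; simp
  | succ m' =>
    have key : (m' + 1 - l) * Nat.choose (m' + 1) l = (m' + 1) * Nat.choose m' l := by
      rw [mul_comm, ← Nat.choose_succ_right_eq, ← Nat.add_one_mul_choose_eq]
    have h := congrArg (fun t : ℕ => (t : ℝ)) key
    simp only [Nat.cast_mul, Nat.cast_sub (by omega : l ≤ m' + 1), Nat.cast_add,
      Nat.cast_one] at h
    rw [Nat.add_sub_cancel]
    push_cast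
    linarith [h]

lemma pow_shift (ϱ : ℝ) (m l : ℕ) (hl : l < m) :
    (-ϱ) * (-ϱ) ^ (m - (l + 1)) = (-ϱ) ^ (m - l) := by
  have : m - l = (m - (l + 1)) + 1 := by omega
  rw [this, pow_succ']

lemma dualD_succ (a ϱ : ℝ) (m n : ℕ) :
    dualD a ϱ (m + 1) n = -ϱ * dualD a ϱ m n + Splus a ϱ m n := by
  unfold dualD Splus
  rw [Finset.sum_range_succ' _ (m + 1)]
  have key : ∀ l ∈ Finset.range (m + 1),
      (Nat.choose (m + 1) (l + 1) : ℝ) * dualD0 a (l + 1) n * (-ϱ) ^ (m + 1 - (l + 1))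
        = (Nat.choose m l : ℝ) * dualD0 a (l + 1) n * (-ϱ) ^ (m - l)
          + (Nat.choose m (l + 1) : ℝ) * dualD0 a (l + 1) n * (-ϱ) ^ (m - l) := by
    intro l _
    rw [Nat.succ_sub_succ, Nat.choose_succ_succ, Nat.cast_add]
    ring
  rw [Finset.sum_congr rfl key, Finset.sum_add_distrib]
  have hB : ∑ l ∈ Finset.range (m + 1),
      (Nat.choose m (l + 1) : ℝ) * dualD0 a (l + 1) n * (-ϱ) ^ (m - l)
        + (Nat.choose (m + 1) 0 : ℝ) * dualD0 a 0 n * (-ϱ) ^ (m + 1 - 0)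
      = -ϱ * ∑ l ∈ Finset.range (m + 1),
          (Nat.choose m l : ℝ) * dualD0 a l n * (-ϱ) ^ (m - l) := by
    rw [Finset.sum_range_succ' (fun l => (Nat.choose m l : ℝ) * dualD0 a l n * (-ϱ) ^ (m - l)) m]
    rw [mul_add, Finset.mul_sum]
    rw [Finset.sum_range_succ
      (fun l => (Nat.choose m (l + 1) : ℝ) * dualD0 a (l + 1) n * (-ϱ) ^ (m - l)) m]
    simp only [Nat.choose_succ_self, Nat.cast_zero, zero_mul, add_zero, Nat.choose_zero_right,
      Nat.cast_one, one_mul, Nat.sub_zero]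
    have step : ∀ l ∈ Finset.range m,
        -ϱ * ((Nat.choose m (l + 1) : ℝ) * dualD0 a (l + 1) n * (-ϱ) ^ (m - (l + 1)))
          = (Nat.choose m (l + 1) : ℝ) * dualD0 a (l + 1) n * (-ϱ) ^ (m - l) := by
      intro l hl
      rw [← pow_shift ϱ m l (Finset.mem_range.mp hl)]
      ring
    rw [Finset.sum_congr rfl step]
    have : -ϱ * (dualD0 a 0 n * (-ϱ) ^ m) = dualD0 a 0 n * (-ϱ) ^ (m + 1) := by
      rw [pow_succ]; ring
    rw [this]
  linarith [hB]

lemma Splus_eq (a ϱ : ℝ) (m n : ℕ) :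
    Splus a ϱ m n = dualD a ϱ (m + 1) n + ϱ * dualD a ϱ m n := by
  rw [dualD_succ]; ring

/-- `m * Splus (m-1)` lemma -/
lemma mul_Splus_pred (a ϱ : ℝ) (m n : ℕ) :
    (m : ℝ) * Splus a ϱ (m - 1) n
      = (m : ℝ) * dualD a ϱ m n + ϱ * m * dualD a ϱ (m - 1) n := by
  cases m with
  | zero => simp
  | succ m' => rw [Nat.add_sub_cancel, Splus_eq]; push_cast; ring

/-- `Σ (m-l) C(m,l) d0(l+1) pow = -ϱ m Splus(m-1)`. -/
lemma sum_mlminus (a ϱ : ℝ) (m n : ℕ) :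
    ∑ l ∈ Finset.range (m + 1),
        ((m : ℝ) - l) * ((Nat.choose m l : ℝ) * dualD0 a (l + 1) n * (-ϱ) ^ (m - l))
      = -(ϱ * m * Splus a ϱ (m - 1) n) := by
  cases m with
  | zero => simp
  | succ m' =>
    rw [Finset.sum_range_succ]
    simp only [Nat.cast_add, Nat.cast_one, sub_self, zero_mul, add_zero]
    have step : ∀ l ∈ Finset.range (m' + 1),
        ((m' : ℝ) + 1 - l) * ((Nat.choose (m' + 1) l : ℝ) * dualD0 a (l + 1) n
            * (-ϱ) ^ (m' + 1 - l))
          = ((m' : ℝ) + 1) * (-ϱ)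
            * ((Nat.choose m' l : ℝ) * dualD0 a (l + 1) n * (-ϱ) ^ (m' - l)) := by
      intro l hl
      have hl' := Finset.mem_range.mp hl
      have h1 := choose_real_shift (m' + 1) l (by omega)
      rw [Nat.add_sub_cancel] at h1
      push_cast at h1
      have h2 := pow_shift ϱ (m' + 1) l (by omega)
      rw [Nat.succ_sub_succ] at h2
      calc ((m' : ℝ) + 1 - l) * ((Nat.choose (m' + 1) l : ℝ) * dualD0 a (l + 1) n
              * (-ϱ) ^ (m' + 1 - l))
          = (((m' : ℝ) + 1 - l) * (Nat.choose (m' + 1) l : ℝ)) * (dualD0 a (l + 1) n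
              * (-ϱ) ^ (m' + 1 - l)) := by ring
        _ = (((m' : ℝ) + 1) * (Nat.choose m' l : ℝ)) * (dualD0 a (l + 1) n
              * ((-ϱ) * (-ϱ) ^ (m' - l))) := by rw [h1, h2]
        _ = ((m' : ℝ) + 1) * (-ϱ)
            * ((Nat.choose m' l : ℝ) * dualD0 a (l + 1) n * (-ϱ) ^ (m' - l)) := by ring
    rw [Finset.sum_congr rfl step, ← Finset.mul_sum]
    unfold Splus
    rw [Nat.add_sub_cancel]
    push_cast
    ring

/-- N1: number operator. -/
lemma sum_lC (a ϱ : ℝ) (m n : ℕ) :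
    ∑ l ∈ Finset.range (m + 1),
        (l : ℝ) * ((Nat.choose m l : ℝ) * dualD0 a l n * (-ϱ) ^ (m - l))
      = (m : ℝ) * dualD a ϱ m n + ϱ * m * dualD a ϱ (m - 1) n := by
  cases m with
  | zero => simp
  | succ m' =>
    have split : ∀ l ∈ Finset.range (m' + 2),
        (l : ℝ) * ((Nat.choose (m' + 1) l : ℝ) * dualD0 a l n * (-ϱ) ^ (m' + 1 - l))
          = ((m' : ℝ) + 1) * ((Nat.choose (m' + 1) l : ℝ) * dualD0 a l n * (-ϱ) ^ (m' + 1 - l))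
            - (((m' : ℝ) + 1 - l) * (Nat.choose (m' + 1) l : ℝ)) * (dualD0 a l n
                * (-ϱ) ^ (m' + 1 - l)) := by
      intro l _; ring
    rw [Finset.sum_congr rfl split, Finset.sum_sub_distrib, ← Finset.mul_sum]
    have hd : ∑ l ∈ Finset.range (m' + 2),
        (Nat.choose (m' + 1) l : ℝ) * dualD0 a l n * (-ϱ) ^ (m' + 1 - l)
          = dualD a ϱ (m' + 1) n := rfl
    rw [hd]
    have step : ∀ l ∈ Finset.range (m' + 2),
        (((m' : ℝ) + 1 - l) * (Nat.choose (m' + 1) l : ℝ)) * (dualD0 a l n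
            * (-ϱ) ^ (m' + 1 - l))
          = ((m' : ℝ) + 1) * ((Nat.choose m' l : ℝ) * (dualD0 a l n * (-ϱ) ^ (m' + 1 - l))) := by
      intro l hl
      have h1 := choose_real_shift (m' + 1) l (Finset.mem_range.mp hl)
      rw [Nat.add_sub_cancel] at h1
      push_cast at h1
      rw [h1]; ring
    rw [Finset.sum_congr rfl step, ← Finset.mul_sum]
    -- now: Σ_{l∈range(m'+2)} C(m',l) d0(l) (−ϱ)^{m'+1−l}: top term l=m'+1 vanishes
    rw [Finset.sum_range_succ]
    simp only [Nat.choose_succ_self, Nat.cast_zero, zero_mul, add_zero]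
    have step2 : ∀ l ∈ Finset.range (m' + 1),
        (Nat.choose m' l : ℝ) * (dualD0 a l n * (-ϱ) ^ (m' + 1 - l))
          = -ϱ * ((Nat.choose m' l : ℝ) * dualD0 a l n * (-ϱ) ^ (m' - l)) := by
      intro l hl
      rw [← pow_shift ϱ (m' + 1) l (Finset.mem_range.mp hl), Nat.succ_sub_succ]
      ring
    rw [Finset.sum_congr rfl step2, ← Finset.mul_sum]
    have hd2 : ∑ l ∈ Finset.range (m' + 1),
        (Nat.choose m' l : ℝ) * dualD0 a l n * (-ϱ) ^ (m' - l) = dualD a ϱ m' n := rfl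
    rw [hd2, Nat.add_sub_cancel]
    push_cast
    ring

/-- N2 -/
lemma sum_lC_pred (a ϱ : ℝ) (m n : ℕ) :
    ∑ l ∈ Finset.range (m + 1),
        (l : ℝ) * ((Nat.choose m l : ℝ) * dualD0 a (l - 1) n * (-ϱ) ^ (m - l))
      = (m : ℝ) * dualD a ϱ (m - 1) n := by
  cases m with
  | zero => simp
  | succ m' =>
    rw [Finset.sum_range_succ' _ (m' + 1)]
    simp only [Nat.cast_zero, zero_mul, add_zero]
    have step : ∀ l ∈ Finset.range (m' + 1),
        ((l : ℝ) + 1) * ((Nat.choose (m' + 1) (l + 1) : ℝ) * dualD0 a l n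
            * (-ϱ) ^ (m' - l))
          = ((m' : ℝ) + 1) * ((Nat.choose m' l : ℝ) * dualD0 a l n * (-ϱ) ^ (m' - l)) := by
      intro l _
      have h1 : ((m' : ℕ) + 1) * Nat.choose m' l = Nat.choose (m' + 1) (l + 1) * (l + 1) :=
        Nat.add_one_mul_choose_eq m' l
      have h1' : ((m' : ℝ) + 1) * (Nat.choose m' l : ℝ)
          = (Nat.choose (m' + 1) (l + 1) : ℝ) * ((l : ℝ) + 1) := by
        exact_mod_cast congrArg (fun t : ℕ => (t : ℝ)) h1
      calc ((l : ℝ) + 1) * ((Nat.choose (m' + 1) (l + 1) : ℝ) * dualD0 a l n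
              * (-ϱ) ^ (m' - l))
          = ((Nat.choose (m' + 1) (l + 1) : ℝ) * ((l : ℝ) + 1)) * (dualD0 a l n
              * (-ϱ) ^ (m' - l)) := by ring
        _ = ((m' : ℝ) + 1) * ((Nat.choose m' l : ℝ) * dualD0 a l n * (-ϱ) ^ (m' - l)) := by
            rw [← h1']; ring
    push_cast
    rw [Finset.sum_congr rfl step, ← Finset.mul_sum]
    have hd2 : ∑ l ∈ Finset.range (m' + 1),
        (Nat.choose m' l : ℝ) * dualD0 a l n * (-ϱ) ^ (m' - l) = dualD a ϱ m' n := rfl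
    rw [hd2]

/-- S1 -/
lemma dualD_S1 (a : ℝ) (ha : 0 < a) (ϱ : ℝ) (m n : ℕ) :
    (n : ℝ) * dualD a ϱ m (n - 1)
      = (a + m) * dualD a ϱ (m + 1) n + ϱ * (a + 2 * m) * dualD a ϱ m n
        + ϱ ^ 2 * m * dualD a ϱ (m - 1) n := by
  have expand : (n : ℝ) * dualD a ϱ m (n - 1)
      = ∑ l ∈ Finset.range (m + 1),
          ((a + m) * ((Nat.choose m l : ℝ) * dualD0 a (l + 1) n * (-ϱ) ^ (m - l))
            - ((m : ℝ) - l) * ((Nat.choose m l : ℝ) * dualD0 a (l + 1) n * (-ϱ) ^ (m - l))) := by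
    unfold dualD
    rw [Finset.mul_sum]
    refine Finset.sum_congr rfl fun l _ => ?_
    have h := d0_R1 a ha l n
    calc (n : ℝ) * ((Nat.choose m l : ℝ) * dualD0 a l (n - 1) * (-ϱ) ^ (m - l))
        = ((n : ℝ) * dualD0 a l (n - 1)) * ((Nat.choose m l : ℝ) * (-ϱ) ^ (m - l)) := by ring
      _ = ((a + l) * dualD0 a (l + 1) n) * ((Nat.choose m l : ℝ) * (-ϱ) ^ (m - l)) := by rw [h]
      _ = _ := by ring
  rw [expand, Finset.sum_sub_distrib, ← Finset.mul_sum, sum_mlminus]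
  have hS : ∑ l ∈ Finset.range (m + 1),
      (Nat.choose m l : ℝ) * dualD0 a (l + 1) n * (-ϱ) ^ (m - l) = Splus a ϱ m n := rfl
  rw [hS, Splus_eq a ϱ m n]
  have h := mul_Splus_pred a ϱ m n
  linear_combination ϱ * h

/-- S3 -/
lemma dualD_S3 (a : ℝ) (ha : 0 < a) (ϱ : ℝ) (m n : ℕ) :
    (n : ℝ) * dualD a ϱ m n
      = (a + m) * dualD a ϱ (m + 1) n + ((m : ℝ) * (1 + 2 * ϱ) + ϱ * a) * dualD a ϱ m n
        + ϱ * (1 + ϱ) * m * dualD a ϱ (m - 1) n := by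
  have expand : (n : ℝ) * dualD a ϱ m n
      = (n : ℝ) * dualD a ϱ m (n - 1)
        + ∑ l ∈ Finset.range (m + 1),
            (l : ℝ) * ((Nat.choose m l : ℝ) * dualD0 a l n * (-ϱ) ^ (m - l)) := by
    have expand2 : (n : ℝ) * dualD a ϱ m (n - 1)
        = ∑ l ∈ Finset.range (m + 1),
            ((a + l) * dualD0 a (l + 1) n) * ((Nat.choose m l : ℝ) * (-ϱ) ^ (m - l)) := by
      unfold dualD
      rw [Finset.mul_sum]
      refine Finset.sum_congr rfl fun l _ => ?_
      rw [← d0_R1 a ha l n]; ring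
    rw [expand2]
    unfold dualD
    rw [Finset.mul_sum, ← Finset.sum_add_distrib]
    refine Finset.sum_congr rfl fun l _ => ?_
    have h := d0_R3 a ha l n
    calc (n : ℝ) * ((Nat.choose m l : ℝ) * dualD0 a l n * (-ϱ) ^ (m - l))
        = ((n : ℝ) * dualD0 a l n) * ((Nat.choose m l : ℝ) * (-ϱ) ^ (m - l)) := by ring
      _ = ((a + l) * dualD0 a (l + 1) n + l * dualD0 a l n)
            * ((Nat.choose m l : ℝ) * (-ϱ) ^ (m - l)) := by rw [h]
      _ = _ := by ring
  rw [expand, dualD_S1 a ha ϱ m n, sum_lC]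
  ring

/-- S2 -/
lemma dualD_S2 (a : ℝ) (ha : 0 < a) (ϱ : ℝ) (m n : ℕ) :
    (a + (n : ℝ)) * dualD a ϱ m (n + 1)
      = (a + m) * dualD a ϱ (m + 1) n + (1 + ϱ) * (a + 2 * m) * dualD a ϱ m n
        + (1 + ϱ) ^ 2 * m * dualD a ϱ (m - 1) n := by
  have expand : (a + (n : ℝ)) * dualD a ϱ m (n + 1)
      = (n : ℝ) * dualD a ϱ m (n - 1)
        + (a * dualD a ϱ m n
            + 2 * ∑ l ∈ Finset.range (m + 1),
                (l : ℝ) * ((Nat.choose m l : ℝ) * dualD0 a l n * (-ϱ) ^ (m - l)))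
        + ∑ l ∈ Finset.range (m + 1),
            (l : ℝ) * ((Nat.choose m l : ℝ) * dualD0 a (l - 1) n * (-ϱ) ^ (m - l)) := by
    have expand2 : (n : ℝ) * dualD a ϱ m (n - 1)
        = ∑ l ∈ Finset.range (m + 1),
            ((a + l) * dualD0 a (l + 1) n) * ((Nat.choose m l : ℝ) * (-ϱ) ^ (m - l)) := by
      unfold dualD
      rw [Finset.mul_sum]
      refine Finset.sum_congr rfl fun l _ => ?_
      rw [← d0_R1 a ha l n]; ring
    rw [expand2]
    unfold dualD
    rw [Finset.mul_sum, Finset.mul_sum, Finset.mul_sum, ← Finset.sum_add_distrib,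
      ← Finset.sum_add_distrib, ← Finset.sum_add_distrib]
    refine Finset.sum_congr rfl fun l _ => ?_
    have h := d0_R2 a ha l n
    calc (a + (n : ℝ)) * ((Nat.choose m l : ℝ) * dualD0 a l (n + 1) * (-ϱ) ^ (m - l))
        = ((a + (n : ℝ)) * dualD0 a l (n + 1)) * ((Nat.choose m l : ℝ) * (-ϱ) ^ (m - l)) := by
          ring
      _ = ((a + l) * dualD0 a (l + 1) n + (a + 2 * l) * dualD0 a l n + l * dualD0 a (l - 1) n)
            * ((Nat.choose m l : ℝ) * (-ϱ) ^ (m - l)) := by rw [h]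
      _ = _ := by ring
  rw [expand, dualD_S1 a ha ϱ m n, sum_lC, sum_lC_pred]
  ring



/-- Two-site self-duality core identity. -/
lemma core2site (a b : ℝ) (ha : 0 < a) (hb : 0 < b) (ϱ : ℝ) (m1 m2 n1 n2 : ℕ) :
    (n1 : ℝ) * (b + n2) * (dualD a ϱ m1 (n1 - 1) * dualD b ϱ m2 (n2 + 1)
        - dualD a ϱ m1 n1 * dualD b ϱ m2 n2)
      + (n2 : ℝ) * (a + n1) * (dualD a ϱ m1 (n1 + 1) * dualD b ϱ m2 (n2 - 1)
        - dualD a ϱ m1 n1 * dualD b ϱ m2 n2)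
    = (m1 : ℝ) * (b + m2) * (dualD a ϱ (m1 - 1) n1 * dualD b ϱ (m2 + 1) n2
        - dualD a ϱ m1 n1 * dualD b ϱ m2 n2)
      + (m2 : ℝ) * (a + m1) * (dualD a ϱ (m1 + 1) n1 * dualD b ϱ (m2 - 1) n2
        - dualD a ϱ m1 n1 * dualD b ϱ m2 n2) := by
  have e1 := dualD_S1 a ha ϱ m1 n1
  have e2 := dualD_S2 a ha ϱ m1 n1
  have e3 := dualD_S3 a ha ϱ m1 n1
  have f1 := dualD_S1 b hb ϱ m2 n2
  have f2 := dualD_S2 b hb ϱ m2 n2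
  have f3 := dualD_S3 b hb ϱ m2 n2
  calc (n1 : ℝ) * (b + n2) * (dualD a ϱ m1 (n1 - 1) * dualD b ϱ m2 (n2 + 1)
        - dualD a ϱ m1 n1 * dualD b ϱ m2 n2)
      + (n2 : ℝ) * (a + n1) * (dualD a ϱ m1 (n1 + 1) * dualD b ϱ m2 (n2 - 1)
        - dualD a ϱ m1 n1 * dualD b ϱ m2 n2)
      = ((n1 : ℝ) * dualD a ϱ m1 (n1 - 1)) * ((b + (n2 : ℝ)) * dualD b ϱ m2 (n2 + 1))
        - ((n1 : ℝ) * dualD a ϱ m1 n1)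
            * (b * dualD b ϱ m2 n2 + (n2 : ℝ) * dualD b ϱ m2 n2)
        + ((a + (n1 : ℝ)) * dualD a ϱ m1 (n1 + 1)) * ((n2 : ℝ) * dualD b ϱ m2 (n2 - 1))
        - ((n2 : ℝ) * dualD b ϱ m2 n2)
            * (a * dualD a ϱ m1 n1 + (n1 : ℝ) * dualD a ϱ m1 n1) := by ring
    _ = _ := by rw [e1, e2, e3, f1, f2, f3]; ring

/-- One-site boundary duality. -/
lemma boundary1site (a : ℝ) (ha : 0 < a) (ϱ θ : ℝ) (m n : ℕ) :
    (n : ℝ) * (1 + θ) * (dualD a ϱ m (n - 1) - dualD a ϱ m n)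
      + θ * (a + n) * (dualD a ϱ m (n + 1) - dualD a ϱ m n)
    = -(m : ℝ) * dualD a ϱ m n + (m : ℝ) * (θ - ϱ) * dualD a ϱ (m - 1) n := by
  have e1 := dualD_S1 a ha ϱ m n
  have e2 := dualD_S2 a ha ϱ m n
  have e3 := dualD_S3 a ha ϱ m n
  calc (n : ℝ) * (1 + θ) * (dualD a ϱ m (n - 1) - dualD a ϱ m n)
      + θ * (a + n) * (dualD a ϱ m (n + 1) - dualD a ϱ m n)
      = (1 + θ) * (((n : ℝ) * dualD a ϱ m (n - 1)) - ((n : ℝ) * dualD a ϱ m n))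
        + θ * (((a + (n : ℝ)) * dualD a ϱ m (n + 1))
            - (a * dualD a ϱ m n + (n : ℝ) * dualD a ϱ m n)) := by ring
    _ = _ := by rw [e1, e2, e3]; ring


variable {V : Type*} [Fintype V] [DecidableEq V]

lemma move_apply {k : ℕ} (η : Config V k) (x y z : V) (h : η.1 x ≠ 0) :
    (η.move x y).1 z = η.1 z - (if z = x then 1 else 0) + (if z = y then 1 else 0) := by
  unfold Config.move
  exact congrArg (fun w : Config V k => w.1 z) (dif_neg h)

lemma move_self {k : ℕ} (η : Config V k) (x : V) : η.move x x = η := by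
  by_cases h : η.1 x = 0
  · unfold Config.move; exact dif_pos h
  · apply Subtype.ext; funext z
    rw [move_apply η x x z h]
    by_cases hz : z = x
    · subst hz; simp; omega
    · simp [hz]


lemma move_move {k : ℕ} (η : Config V k) (x y : V) (hxy : x ≠ y) (h : η.1 x ≠ 0) :
    (η.move x y).move y x = η := by
  have hy : (η.move x y).1 y ≠ 0 := by
    rw [move_apply η x y y h, if_neg (Ne.symm hxy), if_pos rfl]
    omega
  apply Subtype.ext; funext z
  rw [move_apply _ y x z hy, move_apply η x y z h]
  by_cases hzx : z = x
  · subst hzx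
    simp [hxy]
    omega
  · by_cases hzy : z = y
    · subst hzy
      simp [Ne.symm hxy, hzx]
    · simp [hzx, hzy]

lemma moveFn_apply (η : V → ℕ) (x y z : V) (h : η x ≠ 0) :
    moveFn η x y z = η z - (if z = x then 1 else 0) + (if z = y then 1 else 0) := by
  unfold moveFn
  rw [if_neg h]

lemma remFn_apply (η : V → ℕ) (x z : V) :
    remFn η x z = η z - (if z = x then 1 else 0) := rfl

lemma addFn_apply (η : V → ℕ) (x z : V) :
    addFn η x z = η z + (if z = x then 1 else 0) := rfl

/-- factor a product over `univ` at two distinct points -/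
lemma prod_pair_factor (x y : V) (hxy : x ≠ y) (f : V → ℝ) :
    ∏ z, f z = f x * (f y * ∏ z ∈ (univ.erase x).erase y, f z) := by
  rw [← Finset.mul_prod_erase univ f (Finset.mem_univ x),
    ← Finset.mul_prod_erase (univ.erase x) f
      (Finset.mem_erase.mpr ⟨Ne.symm hxy, Finset.mem_univ y⟩)]

/-- factor a product over `univ` at one point -/
lemma prod_one_factor (x : V) (f : V → ℝ) :
    ∏ z, f z = f x * ∏ z ∈ univ.erase x, f z :=
  (Finset.mul_prod_erase univ f (Finset.mem_univ x)).symm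


lemma dualityFn_factor_one (α : V → ℝ) (ϱ : ℝ) {k : ℕ} (ξ : Config V k) (ν : V → ℕ) (x : V) :
    dualityFn α ϱ ξ ν
      = dualD (α x) ϱ (ξ.1 x) (ν x)
        * ∏ z ∈ univ.erase x, dualD (α z) ϱ (ξ.1 z) (ν z) :=
  prod_one_factor x _

lemma dualityFn_rem (α : V → ℝ) (ϱ : ℝ) {k : ℕ} (ξ : Config V k) (η : V → ℕ) (x : V) :
    dualityFn α ϱ ξ (remFn η x)
      = dualD (α x) ϱ (ξ.1 x) (η x - 1)
        * ∏ z ∈ univ.erase x, dualD (α z) ϱ (ξ.1 z) (η z) := by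
  rw [dualityFn_factor_one α ϱ ξ (remFn η x) x]
  congr 1
  · rw [remFn_apply, if_pos rfl]
  · refine Finset.prod_congr rfl fun z hz => ?_
    rw [remFn_apply, if_neg (Finset.ne_of_mem_erase hz), Nat.sub_zero]

lemma dualityFn_add (α : V → ℝ) (ϱ : ℝ) {k : ℕ} (ξ : Config V k) (η : V → ℕ) (x : V) :
    dualityFn α ϱ ξ (addFn η x)
      = dualD (α x) ϱ (ξ.1 x) (η x + 1)
        * ∏ z ∈ univ.erase x, dualD (α z) ϱ (ξ.1 z) (η z) := by
  rw [dualityFn_factor_one α ϱ ξ (addFn η x) x]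
  congr 1
  · rw [addFn_apply, if_pos rfl]
  · refine Finset.prod_congr rfl fun z hz => ?_
    rw [addFn_apply, if_neg (Finset.ne_of_mem_erase hz), Nat.add_zero]

lemma dualityFn_addOne (α : V → ℝ) (ϱ : ℝ) {j : ℕ} (ζ : Config V j) (η : V → ℕ) (x : V) :
    dualityFn α ϱ (ζ.addOne x) η
      = dualD (α x) ϱ (ζ.1 x + 1) (η x)
        * ∏ z ∈ univ.erase x, dualD (α z) ϱ (ζ.1 z) (η z) := by
  rw [dualityFn_factor_one α ϱ (ζ.addOne x) η x]
  congr 1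
  · show dualD (α x) ϱ (ζ.1 x + if x = x then 1 else 0) (η x) = _
    rw [if_pos rfl]
  · refine Finset.prod_congr rfl fun z hz => ?_
    show dualD (α z) ϱ (ζ.1 z + if z = x then 1 else 0) (η z) = _
    rw [if_neg (Finset.ne_of_mem_erase hz), Nat.add_zero]

/-- sum over configurations with a particle at `x`, reindexed by `addOne`. -/
lemma sum_addOne {j : ℕ} (x : V) (F : Config V (j + 1) → ℝ)
    (h0 : ∀ ξ : Config V (j + 1), ξ.1 x = 0 → F ξ = 0) :
    ∑ ξ : Config V (j + 1), F ξ = ∑ ζ : Config V j, F (ζ.addOne x) := by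
  have hfil : ∑ ξ ∈ univ.filter (fun ξ : Config V (j + 1) => ξ.1 x ≠ 0), F ξ
      = ∑ ξ : Config V (j + 1), F ξ := by
    refine Finset.sum_filter_of_ne fun ξ _ hF => ?_
    intro hx; exact hF (h0 ξ hx)
  rw [← hfil]
  refine (Finset.sum_bij' (fun (ζ : Config V j) (_ : ζ ∈ univ) => ζ.addOne x)
    (fun (ξ : Config V (j + 1)) (hξ : ξ ∈ univ.filter fun ξ => ξ.1 x ≠ 0) =>
      (⟨fun z => ξ.1 z - if z = x then 1 else 0, ?_⟩ : Config V j))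
    ?_ ?_ ?_ ?_ ?_).symm
  · -- sum property of the subtraction map
    have hx : ξ.1 x ≠ 0 := (Finset.mem_filter.mp hξ).2
    have hle : ∀ z : V, (if z = x then 1 else 0) ≤ ξ.1 z := fun z => by
      by_cases hz : z = x
      · subst hz; simpa using Nat.one_le_iff_ne_zero.2 hx
      · simp [hz]
    have key : ((∑ z, (ξ.1 z - if z = x then 1 else 0) : ℕ) : ℤ) = (j : ℤ) := by
      rw [Nat.cast_sum]
      rw [Finset.sum_congr rfl (fun z _ => by
        rw [Nat.cast_sub (hle z)])]
      rw [Finset.sum_sub_distrib]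
      have h1 : (∑ z, ((ξ.1 z : ℕ) : ℤ)) = ((j : ℤ) + 1) := by
        rw [← Nat.cast_sum, ξ.2]; push_cast; ring
      rw [h1]
      simp
    exact_mod_cast key
  · intro ζ _
    refine Finset.mem_filter.mpr ⟨Finset.mem_univ _, ?_⟩
    show ζ.1 x + (if x = x then 1 else 0) ≠ 0
    rw [if_pos rfl]; omega
  · intro ξ hξ; exact Finset.mem_univ _
  · intro ζ _
    apply Subtype.ext; funext z
    show ζ.1 z + (if z = x then 1 else 0) - (if z = x then 1 else 0) = ζ.1 z
    omega
  · intro ξ hξ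
    have hx : ξ.1 x ≠ 0 := (Finset.mem_filter.mp hξ).2
    apply Subtype.ext; funext z
    show (ξ.1 z - if z = x then 1 else 0) + (if z = x then 1 else 0) = ξ.1 z
    by_cases hz : z = x
    · subst hz; simp; omega
    · simp [hz]
  · intro ζ _; rfl

/-- reindexing a sum by a particle move. -/
lemma sum_move {k : ℕ} (x y : V) (hxy : x ≠ y) (F G : Config V k → ℝ)
    (hF0 : ∀ ξ : Config V k, ξ.1 x = 0 → F ξ = 0)
    (hG0 : ∀ ζ : Config V k, ζ.1 y = 0 → G ζ = 0)
    (hFG : ∀ ξ : Config V k, ξ.1 x ≠ 0 → F ξ = G (ξ.move x y)) :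
    ∑ ξ : Config V k, F ξ = ∑ ζ : Config V k, G ζ := by
  have hfilF : ∑ ξ ∈ univ.filter (fun ξ : Config V k => ξ.1 x ≠ 0), F ξ
      = ∑ ξ : Config V k, F ξ :=
    Finset.sum_filter_of_ne fun ξ _ hF hx => hF (hF0 ξ hx)
  have hfilG : ∑ ζ ∈ univ.filter (fun ζ : Config V k => ζ.1 y ≠ 0), G ζ
      = ∑ ζ : Config V k, G ζ :=
    Finset.sum_filter_of_ne fun ζ _ hG hy => hG (hG0 ζ hy)
  rw [← hfilF, ← hfilG]
  refine Finset.sum_bij' (fun ξ _ => ξ.move x y) (fun ζ _ => ζ.move y x) ?_ ?_ ?_ ?_ ?_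
  · intro ξ hξ
    have hx := (Finset.mem_filter.mp hξ).2
    refine Finset.mem_filter.mpr ⟨Finset.mem_univ _, ?_⟩
    rw [move_apply ξ x y y hx, if_neg (Ne.symm hxy), if_pos rfl]
    omega
  · intro ζ hζ
    have hy := (Finset.mem_filter.mp hζ).2
    refine Finset.mem_filter.mpr ⟨Finset.mem_univ _, ?_⟩
    rw [move_apply ζ y x x hy, if_neg hxy, if_pos rfl]
    omega
  · intro ξ hξ
    exact move_move ξ x y hxy (Finset.mem_filter.mp hξ).2
  · intro ζ hζ
    exact move_move ζ y x (Ne.symm hxy) (Finset.mem_filter.mp hζ).2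
  · intro ξ hξ
    exact hFG ξ (Finset.mem_filter.mp hξ).2


lemma gamma_pos' (a : ℝ) (ha : 0 < a) (m : ℕ) : 0 < Real.Gamma (a + m) :=
  Real.Gamma_pos_of_pos (by positivity)

lemma gamma_step' (a : ℝ) (ha : 0 < a) (m : ℕ) :
    Real.Gamma (a + ((m : ℝ) + 1)) = (a + m) * Real.Gamma (a + m) := by
  rw [show a + ((m : ℝ) + 1) = (a + m) + 1 by ring, Real.Gamma_add_one (by positivity)]

/-- Detailed balance for the SIP measure. -/
lemma detailed_balance {k : ℕ} (α : V → ℝ) (hα : ∀ x, 0 < α x) (x y : V) (hxy : x ≠ y)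
    (ξ : Config V k) (h : ξ.1 x ≠ 0) :
    sipMeasure α (ξ.move x y) * (((ξ.move x y).1 y : ℝ) * (α x + (ξ.move x y).1 x))
      = sipMeasure α ξ * ((ξ.1 x : ℝ) * (α y + ξ.1 y)) := by
  obtain ⟨s, hs⟩ : ∃ s, ξ.1 x = s + 1 := ⟨ξ.1 x - 1, by omega⟩
  have hmx : (ξ.move x y).1 x = s := by
    rw [move_apply ξ x y x h, if_pos rfl, if_neg hxy, hs]
    omega
  have hmy : (ξ.move x y).1 y = ξ.1 y + 1 := by
    rw [move_apply ξ x y y h, if_neg (Ne.symm hxy), if_pos rfl]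
    omega
  unfold sipMeasure
  rw [prod_pair_factor x y hxy
      (fun z => Real.Gamma (α z + (ξ.move x y).1 z)
        / (Real.Gamma (α z) * Nat.factorial ((ξ.move x y).1 z))),
    prod_pair_factor x y hxy
      (fun z => Real.Gamma (α z + ξ.1 z) / (Real.Gamma (α z) * Nat.factorial (ξ.1 z)))]
  have herase : ∏ z ∈ (univ.erase x).erase y,
      Real.Gamma (α z + (ξ.move x y).1 z)
        / (Real.Gamma (α z) * Nat.factorial ((ξ.move x y).1 z))
      = ∏ z ∈ (univ.erase x).erase y,
          Real.Gamma (α z + ξ.1 z) / (Real.Gamma (α z) * Nat.factorial (ξ.1 z)) := by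
    refine Finset.prod_congr rfl fun z hz => ?_
    have hzy := Finset.ne_of_mem_erase hz
    have hzx := Finset.ne_of_mem_erase (Finset.mem_of_mem_erase hz)
    rw [move_apply ξ x y z h, if_neg hzx, if_neg hzy]
    norm_num
  rw [herase, hmx, hmy, hs]
  set P := ∏ z ∈ (univ.erase x).erase y,
      Real.Gamma (α z + ξ.1 z) / (Real.Gamma (α z) * Nat.factorial (ξ.1 z))
  set t := ξ.1 y
  have hgx : Real.Gamma (α x + ((s : ℝ) + 1)) = (α x + s) * Real.Gamma (α x + s) :=
    gamma_step' (α x) (hα x) s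
  have hgy : Real.Gamma (α y + ((t : ℝ) + 1)) = (α y + t) * Real.Gamma (α y + t) :=
    gamma_step' (α y) (hα y) t
  push_cast
  rw [hgx, hgy, Nat.factorial_succ, Nat.factorial_succ]
  have h1 : Real.Gamma (α x) ≠ 0 := (Real.Gamma_pos_of_pos (hα x)).ne'
  have h2 : Real.Gamma (α y) ≠ 0 := (Real.Gamma_pos_of_pos (hα y)).ne'
  have h3 : (Nat.factorial s : ℝ) ≠ 0 := by positivity
  have h4 : (Nat.factorial t : ℝ) ≠ 0 := by positivity
  have hA : 0 < ∑ z, α z := Finset.sum_pos (fun z _ => hα z) ⟨x, Finset.mem_univ x⟩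
  have hZ : sipZ α k ≠ 0 := by
    unfold sipZ
    exact div_ne_zero (gamma_pos' _ hA k).ne'
      (by positivity)
  push_cast
  field_simp

/-- Measure ratio under adding one particle. -/
lemma measure_addOne {j : ℕ} (α : V → ℝ) (hα : ∀ x, 0 < α x) (hA : 0 < ∑ z, α z)
    (x : V) (ζ : Config V j) :
    sipMeasure α (ζ.addOne x) * ((ζ.1 x : ℝ) + 1) * ((∑ z, α z) + j)
      = sipMeasure α ζ * (((j : ℝ) + 1) * (α x + ζ.1 x)) := by
  have hax : (ζ.addOne x).1 x = ζ.1 x + 1 := by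
    show ζ.1 x + (if x = x then 1 else 0) = ζ.1 x + 1
    rw [if_pos rfl]
  unfold sipMeasure sipZ
  rw [prod_one_factor x (fun z => Real.Gamma (α z + (ζ.addOne x).1 z)
      / (Real.Gamma (α z) * Nat.factorial ((ζ.addOne x).1 z))),
    prod_one_factor x (fun z => Real.Gamma (α z + ζ.1 z)
      / (Real.Gamma (α z) * Nat.factorial (ζ.1 z)))]
  have herase : ∏ z ∈ univ.erase x,
      Real.Gamma (α z + (ζ.addOne x).1 z)
        / (Real.Gamma (α z) * Nat.factorial ((ζ.addOne x).1 z))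
      = ∏ z ∈ univ.erase x,
          Real.Gamma (α z + ζ.1 z) / (Real.Gamma (α z) * Nat.factorial (ζ.1 z)) := by
    refine Finset.prod_congr rfl fun z hz => ?_
    have hzx := Finset.ne_of_mem_erase hz
    have haz : (ζ.addOne x).1 z = ζ.1 z := by
      show ζ.1 z + (if z = x then 1 else 0) = ζ.1 z
      rw [if_neg hzx]
      omega
    rw [haz]
  rw [herase, hax]
  set A := ∑ z, α z
  set P := ∏ z ∈ univ.erase x,
      Real.Gamma (α z + ζ.1 z) / (Real.Gamma (α z) * Nat.factorial (ζ.1 z))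
  set sx := ζ.1 x
  have hg1 : Real.Gamma (A + ((j : ℝ) + 1)) = (A + j) * Real.Gamma (A + j) :=
    gamma_step' A hA j
  have hg2 : Real.Gamma (α x + ((sx : ℝ) + 1)) = (α x + sx) * Real.Gamma (α x + sx) :=
    gamma_step' (α x) (hα x) sx
  push_cast
  rw [hg1, hg2, Nat.factorial_succ, Nat.factorial_succ]
  have h1 : Real.Gamma (α x) ≠ 0 := (Real.Gamma_pos_of_pos (hα x)).ne'
  have h2 : Real.Gamma A ≠ 0 := (Real.Gamma_pos_of_pos hA).ne'
  have h3 : (Nat.factorial sx : ℝ) ≠ 0 := by positivity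
  have h4 : (Nat.factorial j : ℝ) ≠ 0 := by positivity
  have h5 : Real.Gamma (A + j) ≠ 0 := (gamma_pos' A hA j).ne'
  have h6 : 0 < A + (j : ℝ) := by positivity
  push_cast
  field_simp

section openGenLemmas

variable (c : V → V → ℝ) (α ω θ : V → ℝ)

lemma openGen_add (f g : (V → ℕ) → ℝ) (η : V → ℕ) :
    openGen c α ω θ (fun ν => f ν + g ν) η
      = openGen c α ω θ f η + openGen c α ω θ g η := by
  unfold openGen
  have h1 : ∀ x y : V, c x y * η x * (α y + η y) * ((f (moveFn η x y) + g (moveFn η x y))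
        - (f η + g η))
      = c x y * η x * (α y + η y) * (f (moveFn η x y) - f η)
        + c x y * η x * (α y + η y) * (g (moveFn η x y) - g η) := fun x y => by ring
  have h2 : ∀ x : V, ω x * ((η x : ℝ) * (1 + θ x) * ((f (remFn η x) + g (remFn η x))
          - (f η + g η))
        + θ x * (α x + η x) * ((f (addFn η x) + g (addFn η x)) - (f η + g η)))
      = ω x * ((η x : ℝ) * (1 + θ x) * (f (remFn η x) - f η)
          + θ x * (α x + η x) * (f (addFn η x) - f η))
        + ω x * ((η x : ℝ) * (1 + θ x) * (g (remFn η x) - g η)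
          + θ x * (α x + η x) * (g (addFn η x) - g η)) := fun x => by ring
  simp only [h1, h2, Finset.sum_add_distrib]
  ring

lemma openGen_const_mul (r : ℝ) (f : (V → ℕ) → ℝ) (η : V → ℕ) :
    openGen c α ω θ (fun ν => r * f ν) η = r * openGen c α ω θ f η := by
  unfold openGen
  have h1 : ∀ x y : V, c x y * η x * (α y + η y) * (r * f (moveFn η x y) - r * f η)
      = r * (c x y * η x * (α y + η y) * (f (moveFn η x y) - f η)) := fun x y => by ring
  have h2 : ∀ x : V, ω x * ((η x : ℝ) * (1 + θ x) * (r * f (remFn η x) - r * f η)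
        + θ x * (α x + η x) * (r * f (addFn η x) - r * f η))
      = r * (ω x * ((η x : ℝ) * (1 + θ x) * (f (remFn η x) - f η)
        + θ x * (α x + η x) * (f (addFn η x) - f η))) := fun x => by ring
  simp only [h1, h2, ← Finset.mul_sum]
  ring

lemma openGen_zero (η : V → ℕ) :
    openGen c α ω θ (fun _ => (0 : ℝ)) η = 0 := by
  simp [openGen]

lemma openGen_sum {I : Type*} (s : Finset I) (F : I → (V → ℕ) → ℝ) (η : V → ℕ) :
    openGen c α ω θ (fun ν => ∑ i ∈ s, F i ν) η
      = ∑ i ∈ s, openGen c α ω θ (F i) η := by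
  classical
  induction s using Finset.cons_induction with
  | empty => simpa using openGen_zero c α ω θ η
  | cons a s ha ih =>
    simp only [Finset.sum_cons]
    rw [openGen_add c α ω θ (F a) (fun ν => ∑ i ∈ s, F i ν) η, ih]

end openGenLemmas

/-- Reversibility (self-adjointness) of the SIP generator. -/
lemma sipGen_symm {k : ℕ} (c : V → V → ℝ) (hsymm : ∀ x y, c x y = c y x)
    (α : V → ℝ) (hα : ∀ x, 0 < α x) (f g : Config V k → ℝ) :
    ∑ ξ : Config V k, sipMeasure α ξ * (f ξ * sipGen c α g ξ)
      = ∑ ξ : Config V k, sipMeasure α ξ * (g ξ * sipGen c α f ξ) := by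
  classical
  have expand : ∀ f g : Config V k → ℝ,
      ∑ ξ : Config V k, sipMeasure α ξ * (f ξ * sipGen c α g ξ)
        = (∑ x : V, ∑ y : V, ∑ ξ : Config V k,
            sipMeasure α ξ * c x y * (ξ.1 x : ℝ) * (α y + ξ.1 y) * f ξ * g (ξ.move x y))
          - ∑ x : V, ∑ y : V, ∑ ξ : Config V k,
              sipMeasure α ξ * c x y * (ξ.1 x : ℝ) * (α y + ξ.1 y) * f ξ * g ξ := by
    intro f g
    calc ∑ ξ : Config V k, sipMeasure α ξ * (f ξ * sipGen c α g ξ)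
        = ∑ ξ : Config V k, ∑ x : V, ∑ y : V,
            (sipMeasure α ξ * c x y * (ξ.1 x : ℝ) * (α y + ξ.1 y) * f ξ * g (ξ.move x y)
              - sipMeasure α ξ * c x y * (ξ.1 x : ℝ) * (α y + ξ.1 y) * f ξ * g ξ) := by
          refine Finset.sum_congr rfl fun ξ _ => ?_
          unfold sipGen
          simp only [Finset.mul_sum]
          exact Finset.sum_congr rfl fun x _ => Finset.sum_congr rfl fun y _ => by ring
      _ = ∑ x : V, ∑ ξ : Config V k, ∑ y : V,
            (sipMeasure α ξ * c x y * (ξ.1 x : ℝ) * (α y + ξ.1 y) * f ξ * g (ξ.move x y)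
              - sipMeasure α ξ * c x y * (ξ.1 x : ℝ) * (α y + ξ.1 y) * f ξ * g ξ) :=
          Finset.sum_comm
      _ = ∑ x : V, ∑ y : V, ∑ ξ : Config V k,
            (sipMeasure α ξ * c x y * (ξ.1 x : ℝ) * (α y + ξ.1 y) * f ξ * g (ξ.move x y)
              - sipMeasure α ξ * c x y * (ξ.1 x : ℝ) * (α y + ξ.1 y) * f ξ * g ξ) :=
          Finset.sum_congr rfl fun x _ => Finset.sum_comm
      _ = _ := by simp only [Finset.sum_sub_distrib]
  rw [expand f g, expand g f]
  have hdiag : ∀ x y : V, ∑ ξ : Config V k,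
        sipMeasure α ξ * c x y * (ξ.1 x : ℝ) * (α y + ξ.1 y) * f ξ * g ξ
      = ∑ ξ : Config V k,
          sipMeasure α ξ * c x y * (ξ.1 x : ℝ) * (α y + ξ.1 y) * g ξ * f ξ :=
    fun x y => Finset.sum_congr rfl fun ξ _ => by ring
  have hU : ∀ x y : V, ∑ ξ : Config V k,
        sipMeasure α ξ * c x y * (ξ.1 x : ℝ) * (α y + ξ.1 y) * f ξ * g (ξ.move x y)
      = ∑ ξ : Config V k,
          sipMeasure α ξ * c y x * (ξ.1 y : ℝ) * (α x + ξ.1 x) * g ξ * f (ξ.move y x) := by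
    intro x y
    rcases eq_or_ne x y with rfl | hxy
    · refine Finset.sum_congr rfl fun ξ _ => ?_
      simp only [move_self]
      ring
    · refine sum_move x y hxy _ _ (fun ξ hx => by rw [hx]; push_cast; ring)
        (fun ζ hy => by rw [hy]; push_cast; ring) (fun ξ hx => ?_)
      have hdb := detailed_balance α hα x y hxy ξ hx
      have hmm := move_move ξ x y hxy hx
      rw [hmm]
      rw [hsymm y x]
      calc sipMeasure α ξ * c x y * (ξ.1 x : ℝ) * (α y + ξ.1 y) * f ξ * g (ξ.move x y)
          = (sipMeasure α ξ * ((ξ.1 x : ℝ) * (α y + ξ.1 y))) * c x y * f ξ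
              * g (ξ.move x y) := by ring
        _ = (sipMeasure α (ξ.move x y) * (((ξ.move x y).1 y : ℝ)
              * (α x + (ξ.move x y).1 x))) * c x y * f ξ * g (ξ.move x y) := by rw [hdb]
        _ = sipMeasure α (ξ.move x y) * c x y * ((ξ.move x y).1 y : ℝ)
              * (α x + (ξ.move x y).1 x) * g (ξ.move x y) * f ξ := by ring
  have hUsum : (∑ x : V, ∑ y : V, ∑ ξ : Config V k,
        sipMeasure α ξ * c x y * (ξ.1 x : ℝ) * (α y + ξ.1 y) * f ξ * g (ξ.move x y))
      = ∑ x : V, ∑ y : V, ∑ ξ : Config V k,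
          sipMeasure α ξ * c x y * (ξ.1 x : ℝ) * (α y + ξ.1 y) * g ξ * f (ξ.move x y) := by
    calc (∑ x : V, ∑ y : V, ∑ ξ : Config V k,
          sipMeasure α ξ * c x y * (ξ.1 x : ℝ) * (α y + ξ.1 y) * f ξ * g (ξ.move x y))
        = ∑ x : V, ∑ y : V, ∑ ξ : Config V k,
            sipMeasure α ξ * c y x * (ξ.1 y : ℝ) * (α x + ξ.1 x) * g ξ * f (ξ.move y x) :=
          Finset.sum_congr rfl fun x _ => Finset.sum_congr rfl fun y _ => hU x y
      _ = _ := Finset.sum_comm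
  rw [hUsum]
  congr 1
  refine Finset.sum_congr rfl fun x _ => Finset.sum_congr rfl fun y _ => hdiag x y


/-- Bulk self-duality. -/
lemma bulk_duality (c : V → V → ℝ) (hsymm : ∀ x y, c x y = c y x) (hloop : ∀ x, c x x = 0)
    (α : V → ℝ) (hα : ∀ x, 0 < α x) (ϱ : ℝ) {k : ℕ} (ξ : Config V k) (η : V → ℕ) :
    (∑ x : V, ∑ y : V, c x y * (η x : ℝ) * (α y + η y)
        * (dualityFn α ϱ ξ (moveFn η x y) - dualityFn α ϱ ξ η))
      = ∑ x : V, ∑ y : V, c x y * (ξ.1 x : ℝ) * (α y + ξ.1 y)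
          * (dualityFn α ϱ (ξ.move x y) η - dualityFn α ϱ ξ η) := by
  classical
  set f := fun x y : V => c x y * (η x : ℝ) * (α y + η y)
      * (dualityFn α ϱ ξ (moveFn η x y) - dualityFn α ϱ ξ η) with hf
  set g := fun x y : V => c x y * (ξ.1 x : ℝ) * (α y + ξ.1 y)
      * (dualityFn α ϱ (ξ.move x y) η - dualityFn α ϱ ξ η) with hg
  have key : ∀ x y : V, f x y + f y x = g x y + g y x := by
    intro x y
    rcases eq_or_ne x y with rfl | hxy
    · simp only [hf, hg, hloop x]
      ring
    · simp only [hf, hg]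
      rw [hsymm y x]
      set P := ∏ z ∈ (univ.erase x).erase y, dualD (α z) ϱ (ξ.1 z) (η z) with hP
      have factor : ∀ (ζ : Config V k) (ν : V → ℕ),
          (∀ z, z ≠ x → z ≠ y → ζ.1 z = ξ.1 z) → (∀ z, z ≠ x → z ≠ y → ν z = η z) →
          dualityFn α ϱ ζ ν
            = dualD (α x) ϱ (ζ.1 x) (ν x) * (dualD (α y) ϱ (ζ.1 y) (ν y) * P) := by
        intro ζ ν h1 h2
        rw [dualityFn, prod_pair_factor x y hxy]
        congr 1
        congr 1
        refine Finset.prod_congr rfl fun z hz => ?_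
        have hzy := Finset.ne_of_mem_erase hz
        have hzx := Finset.ne_of_mem_erase (Finset.mem_of_mem_erase hz)
        rw [h1 z hzx hzy, h2 z hzx hzy]
      have hD0 : dualityFn α ϱ ξ η
          = dualD (α x) ϱ (ξ.1 x) (η x) * (dualD (α y) ϱ (ξ.1 y) (η y) * P) :=
        factor ξ η (fun _ _ _ => rfl) (fun _ _ _ => rfl)
      have t1 : (η x : ℝ) * dualityFn α ϱ ξ (moveFn η x y)
          = (η x : ℝ) * (dualD (α x) ϱ (ξ.1 x) (η x - 1)
              * (dualD (α y) ϱ (ξ.1 y) (η y + 1) * P)) := by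
        by_cases h : η x = 0
        · have hm : moveFn η x y = η := by unfold moveFn; rw [if_pos h]
          rw [hm, h]
          simp
        · have hx1 : moveFn η x y x = η x - 1 := by
            rw [moveFn_apply η x y x h, if_pos rfl, if_neg hxy]
            omega
          have hy1 : moveFn η x y y = η y + 1 := by
            rw [moveFn_apply η x y y h, if_neg (Ne.symm hxy), if_pos rfl]
            omega
          rw [factor ξ (moveFn η x y) (fun _ _ _ => rfl)
            (fun z hzx hzy => by rw [moveFn_apply η x y z h, if_neg hzx, if_neg hzy]; omega),
            hx1, hy1]
      have t2 : (η y : ℝ) * dualityFn α ϱ ξ (moveFn η y x)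
          = (η y : ℝ) * (dualD (α x) ϱ (ξ.1 x) (η x + 1)
              * (dualD (α y) ϱ (ξ.1 y) (η y - 1) * P)) := by
        by_cases h : η y = 0
        · have hm : moveFn η y x = η := by unfold moveFn; rw [if_pos h]
          rw [hm, h]
          simp
        · have hx1 : moveFn η y x x = η x + 1 := by
            rw [moveFn_apply η y x x h, if_neg hxy, if_pos rfl]
            omega
          have hy1 : moveFn η y x y = η y - 1 := by
            rw [moveFn_apply η y x y h, if_pos rfl, if_neg (Ne.symm hxy)]
            omega
          rw [factor ξ (moveFn η y x) (fun _ _ _ => rfl)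
            (fun z hzx hzy => by rw [moveFn_apply η y x z h, if_neg hzy, if_neg hzx]; omega),
            hx1, hy1]
      have t3 : (ξ.1 x : ℝ) * dualityFn α ϱ (ξ.move x y) η
          = (ξ.1 x : ℝ) * (dualD (α x) ϱ (ξ.1 x - 1) (η x)
              * (dualD (α y) ϱ (ξ.1 y + 1) (η y) * P)) := by
        by_cases h : ξ.1 x = 0
        · have hm : ξ.move x y = ξ := by unfold Config.move; exact dif_pos h
          rw [hm, h]
          simp
        · have hx1 : (ξ.move x y).1 x = ξ.1 x - 1 := by
            rw [move_apply ξ x y x h, if_pos rfl, if_neg hxy]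
            omega
          have hy1 : (ξ.move x y).1 y = ξ.1 y + 1 := by
            rw [move_apply ξ x y y h, if_neg (Ne.symm hxy), if_pos rfl]
            omega
          rw [factor (ξ.move x y) η
            (fun z hzx hzy => by rw [move_apply ξ x y z h, if_neg hzx, if_neg hzy]; omega)
            (fun _ _ _ => rfl), hx1, hy1]
      have t4 : (ξ.1 y : ℝ) * dualityFn α ϱ (ξ.move y x) η
          = (ξ.1 y : ℝ) * (dualD (α x) ϱ (ξ.1 x + 1) (η x)
              * (dualD (α y) ϱ (ξ.1 y - 1) (η y) * P)) := by
        by_cases h : ξ.1 y = 0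
        · have hm : ξ.move y x = ξ := by unfold Config.move; exact dif_pos h
          rw [hm, h]
          simp
        · have hx1 : (ξ.move y x).1 x = ξ.1 x + 1 := by
            rw [move_apply ξ y x x h, if_neg hxy, if_pos rfl]
            omega
          have hy1 : (ξ.move y x).1 y = ξ.1 y - 1 := by
            rw [move_apply ξ y x y h, if_pos rfl, if_neg (Ne.symm hxy)]
            omega
          rw [factor (ξ.move y x) η
            (fun z hzx hzy => by rw [move_apply ξ y x z h, if_neg hzy, if_neg hzx]; omega)
            (fun _ _ _ => rfl), hx1, hy1]
      have hcore := core2site (α x) (α y) (hα x) (hα y) ϱ (ξ.1 x) (ξ.1 y) (η x) (η y)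
      rw [hD0]
      linear_combination (c x y * (α y + (η y : ℝ))) * t1 + (c x y * (α x + (η x : ℝ))) * t2
        - (c x y * (α y + (ξ.1 y : ℝ))) * t3 - (c x y * (α x + (ξ.1 x : ℝ))) * t4
        + (c x y * P) * hcore
  have swapf : (∑ x : V, ∑ y : V, f y x) = ∑ x : V, ∑ y : V, f x y := Finset.sum_comm
  have swapg : (∑ x : V, ∑ y : V, g y x) = ∑ x : V, ∑ y : V, g x y := Finset.sum_comm
  have hsum : (∑ x : V, ∑ y : V, (f x y + f y x)) = ∑ x : V, ∑ y : V, (g x y + g y x) :=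
    Finset.sum_congr rfl fun x _ => Finset.sum_congr rfl fun y _ => key x y
  have hf2 : (∑ x : V, ∑ y : V, (f x y + f y x))
      = (∑ x : V, ∑ y : V, f x y) + ∑ x : V, ∑ y : V, f y x := by
    simp [Finset.sum_add_distrib]
  have hg2 : (∑ x : V, ∑ y : V, (g x y + g y x))
      = (∑ x : V, ∑ y : V, g x y) + ∑ x : V, ∑ y : V, g y x := by
    simp [Finset.sum_add_distrib]
  have := hf2 ▸ hg2 ▸ hsum
  linarith [this, swapf, swapg]

/-- Boundary duality at one site. -/
lemma boundary_site (α : V → ℝ) (hα : ∀ x, 0 < α x) (ϱ : ℝ) (θ : V → ℝ) {k : ℕ}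
    (ξ : Config V k) (η : V → ℕ) (x : V) :
    (η x : ℝ) * (1 + θ x) * (dualityFn α ϱ ξ (remFn η x) - dualityFn α ϱ ξ η)
      + θ x * (α x + η x) * (dualityFn α ϱ ξ (addFn η x) - dualityFn α ϱ ξ η)
    = -(ξ.1 x : ℝ) * dualityFn α ϱ ξ η
      + (θ x - ϱ) * (ξ.1 x : ℝ) * (dualD (α x) ϱ (ξ.1 x - 1) (η x)
          * ∏ z ∈ univ.erase x, dualD (α z) ϱ (ξ.1 z) (η z)) := by
  rw [dualityFn_rem, dualityFn_add, dualityFn_factor_one α ϱ ξ η x]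
  linear_combination (∏ z ∈ univ.erase x, dualD (α z) ϱ (ξ.1 z) (η z))
    * boundary1site (α x) (hα x) ϱ (θ x) (ξ.1 x) (η x)

/-- Action of the open generator on a single duality function. -/
lemma openGen_dual (c : V → V → ℝ) (hsymm : ∀ x y, c x y = c y x) (hloop : ∀ x, c x x = 0)
    (α ω θ : V → ℝ) (hα : ∀ x, 0 < α x) (ϱ : ℝ) {k : ℕ} (ξ : Config V k) (η : V → ℕ) :
    openGen c α ω θ (dualityFn α ϱ ξ) η
      = killedGen c α ω (fun ζ : Config V k => dualityFn α ϱ ζ η) ξ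
        + ∑ x : V, ω x * ((θ x - ϱ) * (ξ.1 x : ℝ)
            * (dualD (α x) ϱ (ξ.1 x - 1) (η x)
              * ∏ z ∈ univ.erase x, dualD (α z) ϱ (ξ.1 z) (η z))) := by
  unfold openGen killedGen sipGen
  rw [bulk_duality c hsymm hloop α hα ϱ ξ η]
  have hb : ∀ x : V, ω x * ((η x : ℝ) * (1 + θ x)
        * (dualityFn α ϱ ξ (remFn η x) - dualityFn α ϱ ξ η)
      + θ x * (α x + η x) * (dualityFn α ϱ ξ (addFn η x) - dualityFn α ϱ ξ η))
      = -(dualityFn α ϱ ξ η * (ω x * (ξ.1 x : ℝ)))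
        + ω x * ((θ x - ϱ) * (ξ.1 x : ℝ) * (dualD (α x) ϱ (ξ.1 x - 1) (η x)
            * ∏ z ∈ univ.erase x, dualD (α z) ϱ (ξ.1 z) (η z))) := by
    intro x
    rw [boundary_site α hα ϱ θ ξ η x]
    ring
  rw [Finset.sum_congr rfl fun x _ => hb x, Finset.sum_add_distrib,
    Finset.sum_neg_distrib, ← Finset.mul_sum]
  ring

end SIPaux
end

open SIPaux in
theorem open_sip_generalized_eigenvalue
    {V : Type*} [Fintype V] [DecidableEq V] (c : V → V → ℝ) (α ω θ : V → ℝ)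
    (hsymm : ∀ x y, c x y = c y x) (hnonneg : ∀ x y, 0 ≤ c x y)
    (hloop : ∀ x, c x x = 0) (hconn : (graphOf c).Connected)
    (hα : ∀ x, 0 < α x) (hω0 : ∀ x, 0 ≤ ω x) (hθ0 : ∀ x, 0 ≤ θ x)
    (ϱ : ℝ) (hϱ : 0 < ϱ) (j : ℕ) (ψ : Config V (j + 1) → ℝ) (lam : ℝ)
    (heig : ∀ η : Config V (j + 1), killedGen c α ω ψ η = -lam * ψ η) :
    ∀ η : V → ℕ,
      openGen c α ω θ (liftF α ϱ ψ) η
        = -lam * liftF α ϱ ψ η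
          + liftF α ϱ
              (fun ζ : Config V j => (j + 1 : ℝ) * ∑ x, ω x * (θ x - ϱ) *
                ((α x + ζ.1 x) / ((∑ z, α z) + (j + 1 : ℝ) - 1)) * ψ (ζ.addOne x)) η := by
  classical
  intro η
  haveI hV : Nonempty V := hconn.nonempty
  have hA : 0 < ∑ z, α z := Finset.sum_pos (fun z _ => hα z) Finset.univ_nonempty
  have hAj : ((∑ z, α z) + (j : ℝ)) ≠ 0 := by positivity
  -- Step 1: linearity of the open generator
  have hlift : liftF α ϱ ψ
      = fun ν => ∑ ξ : Config V (j + 1), (sipMeasure α ξ * ψ ξ) * dualityFn α ϱ ξ ν := rfl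
  have step1 : openGen c α ω θ (liftF α ϱ ψ) η
      = ∑ ξ : Config V (j + 1),
          (sipMeasure α ξ * ψ ξ) * openGen c α ω θ (dualityFn α ϱ ξ) η := by
    rw [hlift, openGen_sum c α ω θ (Finset.univ : Finset (Config V (j + 1)))
      (fun ξ ν => (sipMeasure α ξ * ψ ξ) * dualityFn α ϱ ξ ν) η]
    exact Finset.sum_congr rfl fun ξ _ => openGen_const_mul c α ω θ _ _ η
  rw [step1]
  -- Step 2: per-configuration duality
  have step2 : ∀ ξ : Config V (j + 1),
      (sipMeasure α ξ * ψ ξ) * openGen c α ω θ (dualityFn α ϱ ξ) η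
        = sipMeasure α ξ * (ψ ξ
            * killedGen c α ω (fun ζ : Config V (j + 1) => dualityFn α ϱ ζ η) ξ)
          + (sipMeasure α ξ * ψ ξ)
              * ∑ x : V, ω x * ((θ x - ϱ) * (ξ.1 x : ℝ)
                  * (dualD (α x) ϱ (ξ.1 x - 1) (η x)
                    * ∏ z ∈ Finset.univ.erase x, dualD (α z) ϱ (ξ.1 z) (η z))) := by
    intro ξ
    rw [openGen_dual c hsymm hloop α ω θ hα ϱ ξ η]
    ring
  rw [Finset.sum_congr rfl fun ξ _ => step2 ξ, Finset.sum_add_distrib]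
  -- Part A: the killed part gives the eigenvalue
  have hA1 : ∑ ξ : Config V (j + 1), sipMeasure α ξ * (ψ ξ
        * killedGen c α ω (fun ζ : Config V (j + 1) => dualityFn α ϱ ζ η) ξ)
      = -lam * liftF α ϱ ψ η := by
    have hk : ∀ ξ : Config V (j + 1), sipMeasure α ξ * (ψ ξ
          * killedGen c α ω (fun ζ : Config V (j + 1) => dualityFn α ϱ ζ η) ξ)
        = sipMeasure α ξ * (ψ ξ
            * sipGen c α (fun ζ : Config V (j + 1) => dualityFn α ϱ ζ η) ξ)
          - sipMeasure α ξ * ψ ξ * dualityFn α ϱ ξ η * (∑ x, ω x * (ξ.1 x : ℝ)) := by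
      intro ξ
      unfold killedGen
      ring
    rw [Finset.sum_congr rfl fun ξ _ => hk ξ, Finset.sum_sub_distrib,
      sipGen_symm c hsymm α hα ψ (fun ζ : Config V (j + 1) => dualityFn α ϱ ζ η),
      ← Finset.sum_sub_distrib]
    have hpt : ∀ ξ : Config V (j + 1),
        sipMeasure α ξ * ((fun ζ : Config V (j + 1) => dualityFn α ϱ ζ η) ξ
            * sipGen c α ψ ξ)
          - sipMeasure α ξ * ψ ξ * dualityFn α ϱ ξ η * (∑ x, ω x * (ξ.1 x : ℝ))
        = -lam * (sipMeasure α ξ * ψ ξ * dualityFn α ϱ ξ η) := by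
      intro ξ
      have hei := heig ξ
      unfold killedGen at hei
      linear_combination (sipMeasure α ξ * dualityFn α ϱ ξ η) * hei
    rw [Finset.sum_congr rfl fun ξ _ => hpt ξ, ← Finset.mul_sum]
    rfl
  -- Part B: the boundary part gives the lower lift
  have hB1 : ∑ ξ : Config V (j + 1), (sipMeasure α ξ * ψ ξ)
        * ∑ x : V, ω x * ((θ x - ϱ) * (ξ.1 x : ℝ)
            * (dualD (α x) ϱ (ξ.1 x - 1) (η x)
              * ∏ z ∈ Finset.univ.erase x, dualD (α z) ϱ (ξ.1 z) (η z)))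
      = liftF α ϱ
          (fun ζ : Config V j => (j + 1 : ℝ) * ∑ x, ω x * (θ x - ϱ) *
            ((α x + ζ.1 x) / ((∑ z, α z) + (j + 1 : ℝ) - 1)) * ψ (ζ.addOne x)) η := by
    have hswap1 : ∑ ξ : Config V (j + 1), (sipMeasure α ξ * ψ ξ)
          * ∑ x : V, ω x * ((θ x - ϱ) * (ξ.1 x : ℝ)
              * (dualD (α x) ϱ (ξ.1 x - 1) (η x)
                * ∏ z ∈ Finset.univ.erase x, dualD (α z) ϱ (ξ.1 z) (η z)))
        = ∑ x : V, ∑ ξ : Config V (j + 1), (sipMeasure α ξ * ψ ξ)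
            * (ω x * ((θ x - ϱ) * (ξ.1 x : ℝ)
              * (dualD (α x) ϱ (ξ.1 x - 1) (η x)
                * ∏ z ∈ Finset.univ.erase x, dualD (α z) ϱ (ξ.1 z) (η z)))) := by
      rw [Finset.sum_congr rfl fun ξ _ => Finset.mul_sum _ _ _]
      exact Finset.sum_comm
    rw [hswap1]
    have hper : ∀ x : V, ∑ ξ : Config V (j + 1), (sipMeasure α ξ * ψ ξ)
          * (ω x * ((θ x - ϱ) * (ξ.1 x : ℝ)
            * (dualD (α x) ϱ (ξ.1 x - 1) (η x)
              * ∏ z ∈ Finset.univ.erase x, dualD (α z) ϱ (ξ.1 z) (η z))))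
        = ∑ ζ : Config V j, sipMeasure α ζ * (((j : ℝ) + 1)
            * (ω x * (θ x - ϱ) * ((α x + (ζ.1 x : ℝ)) / ((∑ z, α z) + j))
              * ψ (ζ.addOne x))) * dualityFn α ϱ ζ η := by
      intro x
      rw [sum_addOne x _ (fun ξ hx => by rw [hx]; push_cast; ring)]
      refine Finset.sum_congr rfl fun ζ _ => ?_
      have hax : (ζ.addOne x).1 x = ζ.1 x + 1 := by
        show ζ.1 x + (if x = x then 1 else 0) = ζ.1 x + 1
        rw [if_pos rfl]
      have hprod : ∏ z ∈ Finset.univ.erase x,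
            dualD (α z) ϱ ((ζ.addOne x).1 z) (η z)
          = ∏ z ∈ Finset.univ.erase x, dualD (α z) ϱ (ζ.1 z) (η z) := by
        refine Finset.prod_congr rfl fun z hz => ?_
        have haz : (ζ.addOne x).1 z = ζ.1 z := by
          show ζ.1 z + (if z = x then 1 else 0) = ζ.1 z
          rw [if_neg (Finset.ne_of_mem_erase hz)]
          omega
        rw [haz]
      have hD : dualD (α x) ϱ ((ζ.addOne x).1 x - 1) (η x)
            * ∏ z ∈ Finset.univ.erase x, dualD (α z) ϱ ((ζ.addOne x).1 z) (η z)
          = dualityFn α ϱ ζ η := by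
        rw [hprod, hax, Nat.add_sub_cancel]
        exact (dualityFn_factor_one α ϱ ζ η x).symm
      rw [hD]
      have hm := measure_addOne α hα hA x ζ
      have hm' : sipMeasure α (ζ.addOne x) * (((ζ.addOne x).1 x : ℝ))
          = sipMeasure α ζ * (((j : ℝ) + 1) * (α x + ζ.1 x)) / ((∑ z, α z) + j) := by
        rw [eq_div_iff hAj, hax]
        push_cast
        linear_combination hm
      calc (sipMeasure α (ζ.addOne x) * ψ (ζ.addOne x))
            * (ω x * ((θ x - ϱ) * (((ζ.addOne x).1 x : ℝ)) * dualityFn α ϱ ζ η))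
          = (sipMeasure α (ζ.addOne x) * (((ζ.addOne x).1 x : ℝ)))
              * (ψ (ζ.addOne x) * ω x * (θ x - ϱ) * dualityFn α ϱ ζ η) := by ring
        _ = (sipMeasure α ζ * (((j : ℝ) + 1) * (α x + ζ.1 x)) / ((∑ z, α z) + j))
              * (ψ (ζ.addOne x) * ω x * (θ x - ϱ) * dualityFn α ϱ ζ η) := by rw [hm']
        _ = _ := by
              field_simp
    rw [Finset.sum_congr rfl fun x _ => hper x, Finset.sum_comm]
    have hliftB : liftF α ϱ
          (fun ζ : Config V j => (j + 1 : ℝ) * ∑ x, ω x * (θ x - ϱ) *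
            ((α x + ζ.1 x) / ((∑ z, α z) + (j + 1 : ℝ) - 1)) * ψ (ζ.addOne x)) η
        = ∑ ζ : Config V j, sipMeasure α ζ * (((j : ℝ) + 1)
            * ∑ x, ω x * (θ x - ϱ)
              * ((α x + (ζ.1 x : ℝ)) / ((∑ z, α z) + ((j : ℝ) + 1) - 1))
              * ψ (ζ.addOne x)) * dualityFn α ϱ ζ η := rfl
    rw [hliftB]
    have hden : (∑ z, α z) + ((j : ℝ) + 1) - 1 = (∑ z, α z) + (j : ℝ) := by ring
    simp only [hden]
    refine Finset.sum_congr rfl fun ζ _ => ?_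
    rw [← Finset.sum_mul, ← Finset.mul_sum, ← Finset.mul_sum]
  rw [hA1, hB1]
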